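/- arXiv:1108.3582 — 2 statements merged into one kernel-verified Lean document; each statement's English description precedes it below -/
import Mathlib

section
/- A unit-speed curve α in ℝ³ with κ > 0 is a slant helix if and only if the function σ(s) = (κ²/(κ² + τ²)^{3/2})·(τ/κ)'(s) is constant. -/
set_option maxHeartbeats 1000000

open scoped RealInnerProductSpace ContDiff Topology

noncomputable section

namespace SlantAux

abbrev E3 := EuclideanSpace ℝ (Fin 3)

lemma inner3 (u v : E3) : ⟪u, v⟫ = u 0 * v 0 + u 1 * v 1 + u 2 * v 2 := by
  simp [PiLp.inner_apply, RCLike.inner_apply, Fin.sum_univ_three, mul_comm]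
def cp3 (u v : E3) : E3 :=
  (WithLp.equiv 2 (Fin 3 → ℝ)).symm
    ![u 1 * v 2 - u 2 * v 1, u 2 * v 0 - u 0 * v 2, u 0 * v 1 - u 1 * v 0]
lemma cp3_apply0 (u v : E3) : cp3 u v 0 = u 1 * v 2 - u 2 * v 1 := rfl
lemma cp3_apply1 (u v : E3) : cp3 u v 1 = u 2 * v 0 - u 0 * v 2 := rfl
lemma cp3_apply2 (u v : E3) : cp3 u v 2 = u 0 * v 1 - u 1 * v 0 := rfl

lemma expand_aux (u0 u1 u2 v0 v1 v2 w0 w1 w2 : ℝ)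
    (hu : u0*u0 + u1*u1 + u2*u2 = 1) (hv : v0*v0 + v1*v1 + v2*v2 = 1)
    (huv : u0*v0 + u1*v1 + u2*v2 = 0) :
    w0 = (w0*u0 + w1*u1 + w2*u2)*u0 + (w0*v0 + w1*v1 + w2*v2)*v0 +
      (w0*(u1*v2-u2*v1) + w1*(u2*v0-u0*v2) + w2*(u0*v1-u1*v0))*(u1*v2-u2*v1) := by
  linear_combination ((w0*v0 + w1*v1 + w2*v2) * v0 - w0*(v0*v0+v1*v1+v2*v2)) * hu +
    ((w0*u0 + w1*u1 + w2*u2) * u0 - w0) * hv +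
    (w0*(u0*v0+u1*v1+u2*v2) - (w0*v0+w1*v1+w2*v2)*u0 - (w0*u0+w1*u1+w2*u2)*v0) * huv

lemma expand3 {u v w : E3} (hu : ⟪u,u⟫ = 1) (hv : ⟪v,v⟫ = 1) (huv : ⟪u,v⟫ = 0) :
    w = ⟪w,u⟫ • u + ⟪w,v⟫ • v + ⟪w, cp3 u v⟫ • cp3 u v := by
  rw [inner3] at hu hv huv
  have h0 := expand_aux (u 0) (u 1) (u 2) (v 0) (v 1) (v 2) (w 0) (w 1) (w 2) hu hv huv
  have h1 := expand_aux (u 1) (u 2) (u 0) (v 1) (v 2) (v 0) (w 1) (w 2) (w 0)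
    (by linarith) (by linarith) (by linarith)
  have h2 := expand_aux (u 2) (u 0) (u 1) (v 2) (v 0) (v 1) (w 2) (w 0) (w 1)
    (by linarith) (by linarith) (by linarith)
  have key : ∀ i, w i = (⟪w,u⟫ • u + ⟪w,v⟫ • v + ⟪w, cp3 u v⟫ • cp3 u v) i := by
    have simp0 : ∀ (k : Fin 3), (⟪w,u⟫ • u + ⟪w,v⟫ • v + ⟪w, cp3 u v⟫ • cp3 u v) k
        = ⟪w,u⟫ * u k + ⟪w,v⟫ * v k + ⟪w, cp3 u v⟫ * cp3 u v k := by
      intro k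
      simp [PiLp.add_apply, PiLp.smul_apply]
    intro i
    fin_cases i
    · show w 0 = _
      rw [simp0, inner3, inner3, inner3]
      show w 0 = _ * u 0 + _ * v 0 + _ * cp3 u v 0
      rw [cp3_apply0, cp3_apply1, cp3_apply2]
      linear_combination h0
    · show w 1 = _
      rw [simp0, inner3, inner3, inner3]
      show w 1 = _ * u 1 + _ * v 1 + _ * cp3 u v 1
      rw [cp3_apply0, cp3_apply1, cp3_apply2]
      linear_combination h1
    · show w 2 = _
      rw [simp0, inner3, inner3, inner3]
      show w 2 = _ * u 2 + _ * v 2 + _ * cp3 u v 2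
      rw [cp3_apply0, cp3_apply1, cp3_apply2]
      linear_combination h2
  ext i
  exact key i

lemma cp3_inner_left (u v : E3) : ⟪cp3 u v, u⟫ = 0 := by
  rw [inner3, cp3_apply0, cp3_apply1, cp3_apply2]; ring

lemma cp3_inner_right (u v : E3) : ⟪cp3 u v, v⟫ = 0 := by
  rw [inner3, cp3_apply0, cp3_apply1, cp3_apply2]; ring

lemma cp3_inner_self (u v : E3) :
    ⟪cp3 u v, cp3 u v⟫ = ⟪u,u⟫ * ⟪v,v⟫ - ⟪u,v⟫ ^ 2 := by
  rw [inner3, inner3, inner3, inner3, cp3_apply0, cp3_apply1, cp3_apply2]; ring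


/-- On an open set, a `ContDiffOn ∞` function is differentiable with `HasDerivAt`. -/
lemma hda_of_cdo {F : Type*} [NormedAddCommGroup F] [NormedSpace ℝ F]
    {f : ℝ → F} {I : Set ℝ} (hI : IsOpen I) (hf : ContDiffOn ℝ ∞ f I)
    {s : ℝ} (hs : s ∈ I) : HasDerivAt f (deriv f s) s := by
  have : DifferentiableAt ℝ f s :=
    (hf.differentiableOn (by simp)).differentiableAt (hI.mem_nhds hs)
  exact this.hasDerivAt

/-- derivative of the inner product of two curves, when it is constant on an open set -/
lemma inner_deriv_eq_zero {f g : ℝ → E3} {f' g' : E3} {I : Set ℝ} (hI : IsOpen I)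
    {s : ℝ} (hs : s ∈ I) (hf : HasDerivAt f f' s) (hg : HasDerivAt g g' s)
    {c : ℝ} (hc : ∀ u ∈ I, ⟪f u, g u⟫ = c) : ⟪f s, g'⟫ + ⟪f', g s⟫ = 0 := by
  have h1 : HasDerivAt (fun u => ⟪f u, g u⟫) (⟪f s, g'⟫ + ⟪f', g s⟫) s :=
    hf.inner ℝ hg
  have h2 : (fun u => ⟪f u, g u⟫) =ᶠ[nhds s] (fun _ => c) := by
    filter_upwards [hI.mem_nhds hs] with u hu using hc u hu
  have h3 : HasDerivAt (fun u => ⟪f u, g u⟫) 0 s :=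
    (hasDerivAt_const s c).congr_of_eventuallyEq h2
  exact h1.unique h3

/-- zero derivative on open preconnected set implies constant -/
lemma const_of_deriv_zero {F : Type*} [NormedAddCommGroup F] [NormedSpace ℝ F]
    {f : ℝ → F} {I : Set ℝ} (hI : IsOpen I) (hconn : IsPreconnected I)
    (hf : ∀ s ∈ I, HasDerivAt f 0 s) {x y : ℝ} (hx : x ∈ I) (hy : y ∈ I) :
    f x = f y := by
  have hloc : ∀ s ∈ I, ∀ᶠ u in nhds s, f u = f s := by
    intro s hs
    obtain ⟨ε, hε, hball⟩ := Metric.isOpen_iff.1 hI s hs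
    have hconv : Convex ℝ (Metric.ball s ε) := convex_ball s ε
    have hdiff : DifferentiableOn ℝ f (Metric.ball s ε) := fun u hu =>
      ((hf u (hball hu)).differentiableAt).differentiableWithinAt
    have hder : ∀ u ∈ Metric.ball s ε, fderivWithin ℝ f (Metric.ball s ε) u = 0 := by
      intro u hu
      have h1 : fderiv ℝ f u = 0 := by
        have := (hf u (hball hu)).hasFDerivAt.fderiv
        rw [this]; ext z : 1 <;> simp
      rw [fderivWithin_of_isOpen Metric.isOpen_ball hu, h1]
    filter_upwards [Metric.isOpen_ball.mem_nhds (Metric.mem_ball_self hε)] with u hu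
    exact hconv.is_const_of_fderivWithin_eq_zero hdiff hder hu (Metric.mem_ball_self hε)
  -- clopen argument
  set A := {u | u ∈ I ∧ f u = f x} with hA
  set B := {u | u ∈ I ∧ f u ≠ f x} with hB
  have hAopen : IsOpen A := by
    rw [Metric.isOpen_iff]
    intro u hu
    obtain ⟨ε, hε, hball⟩ := Metric.isOpen_iff.1 hI u hu.1
    obtain ⟨V, hVsub, hVopen, hVmem⟩ := eventually_nhds_iff.mp (hloc u hu.1)
    obtain ⟨δ, hδ, hδball⟩ := Metric.isOpen_iff.1 hVopen u hVmem
    refine ⟨min ε δ, lt_min hε hδ, fun z hz => ?_⟩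
    have hz1 : z ∈ Metric.ball u ε := Metric.ball_subset_ball (min_le_left _ _) hz
    have hz2 : z ∈ V := hδball (Metric.ball_subset_ball (min_le_right _ _) hz)
    exact ⟨hball hz1, (hVsub z hz2).trans hu.2⟩
  have hBopen : IsOpen B := by
    rw [Metric.isOpen_iff]
    intro u hu
    obtain ⟨ε, hε, hball⟩ := Metric.isOpen_iff.1 hI u hu.1
    obtain ⟨V, hVsub, hVopen, hVmem⟩ := eventually_nhds_iff.mp (hloc u hu.1)
    obtain ⟨δ, hδ, hδball⟩ := Metric.isOpen_iff.1 hVopen u hVmem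
    refine ⟨min ε δ, lt_min hε hδ, fun z hz => ?_⟩
    have hz1 : z ∈ Metric.ball u ε := Metric.ball_subset_ball (min_le_left _ _) hz
    have hz2 : z ∈ V := hδball (Metric.ball_subset_ball (min_le_right _ _) hz)
    exact ⟨hball hz1, (hVsub z hz2).symm ▸ hu.2⟩
  have hsub : I ⊆ A ∪ B := fun u hu => by
    by_cases h : f u = f x
    · exact Or.inl ⟨hu, h⟩
    · exact Or.inr ⟨hu, h⟩
  have hdisj : Disjoint A B := by
    rw [Set.disjoint_iff]
    rintro u ⟨⟨-, h1⟩, ⟨-, h2⟩⟩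
    exact absurd h1 h2
  have hIA : (I ∩ A).Nonempty := ⟨x, hx, hx, rfl⟩
  have := hconn.subset_left_of_subset_union hAopen hBopen hdisj hsub hIA
  exact ((this hy).2).symm

/-- continuous nonvanishing function on preconnected has constant sign -/
lemma sign_const {e : ℝ → ℝ} {I : Set ℝ} (hconn : IsPreconnected I)
    (he : ContinuousOn e I) (hne : ∀ s ∈ I, e s ≠ 0)
    {x y : ℝ} (hx : x ∈ I) (hy : y ∈ I) : 0 < e x * e y := by
  rcases lt_or_gt_of_ne (hne x hx) with h1 | h1 <;>
    rcases lt_or_gt_of_ne (hne y hy) with h2 | h2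
  · nlinarith
  · exfalso
    have h0 : (0:ℝ) ∈ Set.Icc (e x) (e y) := ⟨h1.le, h2.le⟩
    obtain ⟨z, hz, hez⟩ := hconn.intermediate_value hx hy he h0
    exact hne z hz hez
  · exfalso
    have h0 : (0:ℝ) ∈ Set.Icc (e y) (e x) := ⟨h2.le, h1.le⟩
    obtain ⟨z, hz, hez⟩ := hconn.intermediate_value hy hx he h0
    exact hne z hz hez
  · nlinarith


lemma deriv_sq_eq {p q : ℝ → ℝ} {I : Set ℝ} (hI : IsOpen I) {s : ℝ} (hs : s ∈ I)
    (hp : DifferentiableAt ℝ p s) (hq : DifferentiableAt ℝ q s)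
    (hpc : ContinuousAt p s) (hqc : ContinuousAt q s)
    (hpq : ∀ u ∈ I, (p u)^2 = (q u)^2) : (deriv p s)^2 = (deriv q s)^2 := by
  by_cases hq0 : q s = 0
  · have hp0 : p s = 0 := by
      have := hpq s hs; rw [hq0] at this; nlinarith [sq_nonneg (p s)]
    have hP : Filter.Tendsto (slope p s) (𝓝[≠] s) (𝓝 (deriv p s)) :=
      hasDerivAt_iff_tendsto_slope.mp hp.hasDerivAt
    have hQ : Filter.Tendsto (slope q s) (𝓝[≠] s) (𝓝 (deriv q s)) :=
      hasDerivAt_iff_tendsto_slope.mp hq.hasDerivAt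
    have hP2 : Filter.Tendsto (fun u => (slope p s u)^2) (𝓝[≠] s) (𝓝 ((deriv p s)^2)) :=
      (continuous_pow 2).continuousAt.tendsto.comp hP
    have hQ2 : Filter.Tendsto (fun u => (slope q s u)^2) (𝓝[≠] s) (𝓝 ((deriv q s)^2)) :=
      (continuous_pow 2).continuousAt.tendsto.comp hQ
    have heq : (fun u => (slope p s u)^2) =ᶠ[𝓝[≠] s] (fun u => (slope q s u)^2) := by
      have hImem : I ∈ 𝓝[≠] s := nhdsWithin_le_nhds (hI.mem_nhds hs)
      filter_upwards [hImem] with u hu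
      simp only [slope_def_field, hp0, hq0, sub_zero]
      rw [div_pow, div_pow, hpq u hu]
    exact tendsto_nhds_unique (hP2.congr' heq) hQ2
  · have hps : (p s)^2 = (q s)^2 := hpq s hs
    have habs : p s = q s ∨ p s = -q s := sq_eq_sq_iff_eq_or_eq_neg.mp hps
    have key : ∀ (ε : ℝ), ε = 1 ∨ ε = -1 → p s = ε * q s →
        deriv p s = ε * deriv q s := by
      intro ε hε hpε
      have hεabs : |ε| = 1 := by rcases hε with h | h <;> rw [h] <;> norm_num
      have hε2 : ε^2 = 1 := by rcases hε with h | h <;> rw [h] <;> norm_num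
      have hp0 : p s ≠ 0 := by
        rcases hε with h | h <;> rw [h] at hpε <;> simp [hpε, hq0]
      have hA : 0 < |p s| := abs_pos.mpr hp0
      have hev : p =ᶠ[𝓝 s] (fun u => ε * q u) := by
        have h1 : ∀ᶠ u in 𝓝 s, |p u - p s| < |p s| / 2 := by
          have : ∀ᶠ u in 𝓝 s, p u ∈ Metric.ball (p s) (|p s|/2) := by
            exact hpc.tendsto (Metric.ball_mem_nhds _ (by positivity))
          filter_upwards [this] with u hu
          simpa [Real.dist_eq] using hu
        have h2 : ∀ᶠ u in 𝓝 s, |q u - q s| < |p s| / 2 := by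
          have : ∀ᶠ u in 𝓝 s, q u ∈ Metric.ball (q s) (|p s|/2) := by
            exact hqc.tendsto (Metric.ball_mem_nhds _ (by positivity))
          filter_upwards [this] with u hu
          simpa [Real.dist_eq] using hu
        filter_upwards [h1, h2, hI.mem_nhds hs] with u hu1 hu2 huI
        have hor : p u = ε * q u ∨ p u = -(ε * q u) := by
          have h3 : (p u)^2 = (ε * q u)^2 := by
            rw [mul_pow, hε2, one_mul]; exact hpq u huI
          exact sq_eq_sq_iff_eq_or_eq_neg.mp h3
        rcases hor with h | h
        · exact h
        · exfalso
          have hq' : |ε * q u - p s| < |p s| / 2 := by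
            have he : ε * q u - p s = ε * (q u - q s) := by rw [hpε]; ring
            rw [he, abs_mul, hεabs, one_mul]; exact hu2
          have hpu : |(-(ε * q u)) - p s| < |p s| / 2 := by rw [← h]; exact hu1
          rcases abs_lt.mp hq' with ⟨c1, c2⟩
          rcases abs_lt.mp hpu with ⟨c3, c4⟩
          rcases abs_cases (p s) with ⟨he1, -⟩ | ⟨he1, -⟩ <;> linarith
      calc deriv p s = deriv (fun u => ε * q u) s := Filter.EventuallyEq.deriv_eq hev
        _ = ε * deriv q s := deriv_const_mul _ hq
    rcases habs with h | h
    · have := key 1 (Or.inl rfl) (by linarith)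
      rw [this]; ring
    · have := key (-1) (Or.inr rfl) (by linarith)
      rw [this]; ring


def sigmaFun (κ τ : ℝ → ℝ) : ℝ → ℝ :=
  fun s => κ s^2 / (κ s^2 + τ s^2) ^ ((3:ℝ)/2) * deriv (fun u => τ u / κ u) s

lemma sigmaFun_continuousOn {κ τ : ℝ → ℝ} {I : Set ℝ} (hI : IsOpen I)
    (hκ : ContDiffOn ℝ ∞ κ I) (hτ : ContDiffOn ℝ ∞ τ I)
    (hκpos : ∀ s ∈ I, 0 < κ s) : ContinuousOn (sigmaFun κ τ) I := by
  have hκc : ContinuousOn κ I := hκ.continuousOn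
  have hτc : ContinuousOn τ I := hτ.continuousOn
  have hX : ContinuousOn (fun s => κ s^2 + τ s^2) I :=
    (hκc.pow 2).add (hτc.pow 2)
  have hXr : ContinuousOn (fun s => (κ s^2 + τ s^2) ^ ((3:ℝ)/2)) I :=
    hX.rpow_const (fun s _ => Or.inr (by norm_num))
  have hg : ContDiffOn ℝ ∞ (fun u => τ u / κ u) I :=
    hτ.div hκ (fun s hs => (hκpos s hs).ne')
  have hgd : ContinuousOn (deriv (fun u => τ u / κ u)) I :=
    hg.continuousOn_deriv_of_isOpen hI (by exact_mod_cast le_top)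
  exact (((hκc.pow 2).div hXr (fun s hs => by
    have : (0:ℝ) < (κ s^2 + τ s^2) ^ ((3:ℝ)/2) :=
      Real.rpow_pos_of_pos (by nlinarith [hκpos s hs, sq_nonneg (τ s)]) _
    exact this.ne')).mul hgd)

lemma sigmaFun_sq_congr {κ τ τ' : ℝ → ℝ} {I : Set ℝ} (hI : IsOpen I)
    (hκ : ContDiffOn ℝ ∞ κ I) (hτ : ContDiffOn ℝ ∞ τ I) (hτ' : ContDiffOn ℝ ∞ τ' I)
    (hκpos : ∀ s ∈ I, 0 < κ s) (hsq : ∀ s ∈ I, (τ' s)^2 = (τ s)^2) :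
    ∀ s ∈ I, (sigmaFun κ τ' s)^2 = (sigmaFun κ τ s)^2 := by
  intro s hs
  have hκne : ∀ u ∈ I, κ u ≠ 0 := fun u hu => (hκpos u hu).ne'
  have hp : ContDiffOn ℝ ∞ (fun u => τ' u / κ u) I := hτ'.div hκ hκne
  have hq : ContDiffOn ℝ ∞ (fun u => τ u / κ u) I := hτ.div hκ hκne
  have hpd : DifferentiableAt ℝ (fun u => τ' u / κ u) s :=
    (hp.differentiableOn (by simp)).differentiableAt (hI.mem_nhds hs)
  have hqd : DifferentiableAt ℝ (fun u => τ u / κ u) s :=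
    (hq.differentiableOn (by simp)).differentiableAt (hI.mem_nhds hs)
  have hder : (deriv (fun u => τ' u / κ u) s)^2 = (deriv (fun u => τ u / κ u) s)^2 := by
    refine deriv_sq_eq hI hs hpd hqd hpd.continuousAt hqd.continuousAt ?_
    intro u hu
    rw [div_pow, div_pow, hsq u hu]
  unfold sigmaFun
  rw [mul_pow, mul_pow, hder, hsq s hs]

lemma sigmaFun_const_transfer {κ τ τ' : ℝ → ℝ} {I : Set ℝ} (hI : IsOpen I)
    (hconn : IsPreconnected I)
    (hκ : ContDiffOn ℝ ∞ κ I) (hτ : ContDiffOn ℝ ∞ τ I) (hτ' : ContDiffOn ℝ ∞ τ' I)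
    (hκpos : ∀ s ∈ I, 0 < κ s) (hsq : ∀ s ∈ I, (τ' s)^2 = (τ s)^2) :
    (∃ C, ∀ s ∈ I, sigmaFun κ τ' s = C) → (∃ C, ∀ s ∈ I, sigmaFun κ τ s = C) := by
  rintro ⟨C, hC⟩
  have hsig : ∀ s ∈ I, (sigmaFun κ τ s)^2 = C^2 := by
    intro s hs
    rw [← sigmaFun_sq_congr hI hκ hτ hτ' hκpos hsq s hs, hC s hs]
  by_cases hC0 : C = 0
  · refine ⟨0, fun s hs => ?_⟩
    have := hsig s hs
    rw [hC0] at this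
    simpa using pow_eq_zero_iff (n := 2) (by norm_num) |>.mp (by simpa using this)
  · -- σ never vanishes; sign is constant
    have hcont : ContinuousOn (sigmaFun κ τ) I := sigmaFun_continuousOn hI hκ hτ hκpos
    have hne : ∀ s ∈ I, sigmaFun κ τ s ≠ 0 := by
      intro s hs h0
      have h2 := hsig s hs
      rw [h0] at h2
      exact hC0 (by nlinarith [h2])
    rcases Set.eq_empty_or_nonempty I with hIe | ⟨x, hx⟩
    · exact ⟨0, fun s hs => absurd (hIe ▸ hs) (Set.notMem_empty s)⟩
    refine ⟨sigmaFun κ τ x, fun s hs => ?_⟩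
    -- both σ s and σ x are in {C, -C}, and have the same sign
    have h1 : sigmaFun κ τ s = C ∨ sigmaFun κ τ s = -C :=
      sq_eq_sq_iff_eq_or_eq_neg.mp ((hsig s hs))
    have h2 : sigmaFun κ τ x = C ∨ sigmaFun κ τ x = -C :=
      sq_eq_sq_iff_eq_or_eq_neg.mp ((hsig x hx))
    have hsign := sign_const hconn hcont hne hs hx
    rcases h1 with h1 | h1 <;> rcases h2 with h2 | h2 <;>
      rw [h1, h2] at hsign ⊢ <;> first | rfl | (exfalso; nlinarith [sq_nonneg C])


lemma rpow_three_halves {X : ℝ} (hX : 0 < X) : X ^ ((3:ℝ)/2) = X * Real.sqrt X := by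
  rw [Real.sqrt_eq_rpow, show ((3:ℝ)/2) = 1 + 1/2 by norm_num,
    Real.rpow_add hX, Real.rpow_one]

theorem classical_main
    {I : Set ℝ} (hI : IsOpen I) (hconn : IsPreconnected I)
    {t n m : ℝ → E3} {κ τ : ℝ → ℝ}
    (hκ : ContDiffOn ℝ ∞ κ I) (hτ : ContDiffOn ℝ ∞ τ I)
    (htc : ContDiffOn ℝ ∞ t I) (hnc : ContDiffOn ℝ ∞ n I) (hmc : ContDiffOn ℝ ∞ m I)
    (hκpos : ∀ s ∈ I, 0 < κ s)
    (htt : ∀ s ∈ I, ⟪t s, t s⟫ = 1) (hnn : ∀ s ∈ I, ⟪n s, n s⟫ = 1)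
    (hmm : ∀ s ∈ I, ⟪m s, m s⟫ = 1)
    (htn : ∀ s ∈ I, ⟪t s, n s⟫ = 0) (htm : ∀ s ∈ I, ⟪t s, m s⟫ = 0)
    (hnm : ∀ s ∈ I, ⟪n s, m s⟫ = 0)
    (hspan : ∀ s ∈ I, ∀ w : E3, w = ⟪w, t s⟫ • t s + ⟪w, n s⟫ • n s + ⟪w, m s⟫ • m s)
    (F1 : ∀ s ∈ I, deriv t s = κ s • n s)
    (F2 : ∀ s ∈ I, deriv n s = -(κ s) • t s + τ s • m s)
    (F3 : ∀ s ∈ I, deriv m s = -(τ s) • n s) :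
    (∃ L : E3, ‖L‖ = 1 ∧ ∃ c : ℝ, ∀ s ∈ I, ⟪n s, L⟫ = c) ↔
      (∃ C : ℝ, ∀ s ∈ I, sigmaFun κ τ s = C) := by
  have hκne : ∀ s ∈ I, κ s ≠ 0 := fun s hs => (hκpos s hs).ne'
  have hXpos : ∀ s ∈ I, 0 < κ s^2 + τ s^2 := fun s hs => by
    nlinarith [hκpos s hs, sq_nonneg (τ s)]
  have hdt : ∀ s ∈ I, HasDerivAt t (κ s • n s) s := fun s hs =>
    F1 s hs ▸ hda_of_cdo hI htc hs
  have hdn : ∀ s ∈ I, HasDerivAt n (-(κ s) • t s + τ s • m s) s := fun s hs =>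
    F2 s hs ▸ hda_of_cdo hI hnc hs
  have hdm : ∀ s ∈ I, HasDerivAt m (-(τ s) • n s) s := fun s hs =>
    F3 s hs ▸ hda_of_cdo hI hmc hs
  rcases Set.eq_empty_or_nonempty I with hIe | ⟨s₀, hs₀⟩
  · subst hIe
    constructor
    · rintro -; exact ⟨0, fun s hs => absurd hs (Set.notMem_empty s)⟩
    · rintro -
      refine ⟨EuclideanSpace.single 0 1, by simp, 0, fun s hs => absurd hs (Set.notMem_empty s)⟩
  constructor
  · -- slant helix → sigma constant
    rintro ⟨L, hL, c, hc⟩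
    have hLL : ⟪L, L⟫ = 1 := by
      rw [real_inner_self_eq_norm_mul_norm, hL]; norm_num
    set a : ℝ → ℝ := fun s => ⟪t s, L⟫ with ha_def
    set e : ℝ → ℝ := fun s => ⟪m s, L⟫ with he_def
    have hda : ∀ s ∈ I, HasDerivAt a (κ s * c) s := by
      intro s hs
      have h1 := (hdt s hs).inner ℝ (hasDerivAt_const s L)
      have h2 : ⟪t s, (0:E3)⟫ + ⟪κ s • n s, L⟫ = κ s * c := by
        rw [inner_zero_right, zero_add, real_inner_smul_left, hc s hs]
      rw [h2] at h1
      exact h1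
    have hde : ∀ s ∈ I, HasDerivAt e (-(τ s) * c) s := by
      intro s hs
      have h1 := (hdm s hs).inner ℝ (hasDerivAt_const s L)
      have h2 : ⟪m s, (0:E3)⟫ + ⟪-(τ s) • n s, L⟫ = -(τ s) * c := by
        rw [inner_zero_right, zero_add, real_inner_smul_left, hc s hs]
      rw [h2] at h1
      exact h1
    have hrel : ∀ s ∈ I, κ s * a s = τ s * e s := by
      intro s hs
      have h1 := inner_deriv_eq_zero hI hs (hdn s hs) (hasDerivAt_const s L) hc
      simp only [inner_zero_right, zero_add, inner_add_left, real_inner_smul_left] at h1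
      have : -(κ s) * a s + τ s * e s = 0 := by
        simpa [ha_def, he_def] using h1
      linarith
    have hsum : ∀ s ∈ I, a s^2 + c^2 + e s^2 = 1 := by
      intro s hs
      have h1 := hspan s hs L
      have h2 : ⟪L, L⟫ = ⟪L, t s⟫ * ⟪L, t s⟫ + ⟪L, n s⟫ * ⟪L, n s⟫ + ⟪L, m s⟫ * ⟪L, m s⟫ := by
        nth_rewrite 2 [h1]
        rw [inner_add_right, inner_add_right, real_inner_smul_right, real_inner_smul_right,
          real_inner_smul_right]
      rw [hLL] at h2
      have h3 : ⟪L, t s⟫ = a s := real_inner_comm (t s) L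
      have h4 : ⟪L, n s⟫ = c := (real_inner_comm (n s) L).trans (hc s hs)
      have h5 : ⟪L, m s⟫ = e s := real_inner_comm (m s) L
      rw [h3, h4, h5] at h2
      nlinarith [h2]
    have hc2 : c^2 < 1 := by
      rcases lt_or_ge (c^2) 1 with h | h
      · exact h
      · exfalso
        have hae : ∀ s ∈ I, a s = 0 := by
          intro s hs
          nlinarith [hsum s hs, sq_nonneg (a s), sq_nonneg (e s)]
        have hder0 : deriv a s₀ = 0 := by
          have hev : a =ᶠ[nhds s₀] (fun _ => 0) := by
            filter_upwards [hI.mem_nhds hs₀] with u hu using hae u hu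
          rw [hev.deriv_eq]; simp
        have := (hda s₀ hs₀).deriv
        rw [hder0] at this
        have hcne : c ≠ 0 := by intro h0; rw [h0] at h; norm_num at h
        exact (mul_ne_zero (hκne s₀ hs₀) hcne) this.symm
    have hkey : ∀ s ∈ I, (κ s^2 + τ s^2) * e s^2 = κ s^2 * (1 - c^2) := by
      intro s hs
      have h1 := hrel s hs
      have h2 := hsum s hs
      linear_combination (-(τ s * e s + κ s * a s)) * h1 + (κ s^2) * h2
    have hene : ∀ s ∈ I, e s ≠ 0 := by
      intro s hs h0
      have hk := hkey s hs
      rw [h0] at hk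
      have hp1 : 0 < κ s^2 := pow_pos (hκpos s hs) 2
      have hp2 : (0:ℝ) < 1 - c^2 := by linarith
      nlinarith [hk, hp1, hp2]
    have hecont : ContinuousOn e I := by
      exact (hmc.continuousOn.inner continuousOn_const)
    -- compute sigma
    have hsig : ∀ s ∈ I, sigmaFun κ τ s = κ s * c / (Real.sqrt (κ s^2 + τ s^2) * e s) := by
      intro s hs
      have hX := hXpos s hs
      have hsX : 0 < Real.sqrt (κ s^2 + τ s^2) := Real.sqrt_pos.mpr hX
      have hsq : Real.sqrt (κ s^2 + τ s^2) * Real.sqrt (κ s^2 + τ s^2) = κ s^2 + τ s^2 :=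
        Real.mul_self_sqrt hX.le
      -- deriv (τ/κ) = deriv (a/e) = c (κ e + τ a)/e²
      have hadiv : ∀ u ∈ I, τ u / κ u = a u / e u := by
        intro u hu
        rw [div_eq_div_iff (hκne u hu) (hene u hu)]
        have := hrel u hu
        linarith
      have hdiv_ev : (fun u => τ u / κ u) =ᶠ[nhds s] (fun u => a u / e u) := by
        filter_upwards [hI.mem_nhds hs] with u hu using hadiv u hu
      have hdq : HasDerivAt (fun u => a u / e u)
          ((κ s * c * e s - a s * (-(τ s) * c)) / e s^2) s :=
        (hda s hs).div (hde s hs) (hene s hs)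
      have hderiv_eq : deriv (fun u => τ u / κ u) s =
          (κ s * c * e s - a s * (-(τ s) * c)) / e s^2 := by
        rw [hdiv_ev.deriv_eq, hdq.deriv]
      unfold sigmaFun
      rw [hderiv_eq, rpow_three_halves hX]
      have hrel' := hrel s hs
      have haux : κ s * (κ s * e s + τ s * a s) = (κ s^2 + τ s^2) * e s := by
        linear_combination τ s * hrel'
      have hden1 : ((κ s^2 + τ s^2) ^ (1:ℕ) * Real.sqrt (κ s^2 + τ s^2)) * e s^2 ≠ 0 := by
        simpa using mul_ne_zero (mul_ne_zero hX.ne' hsX.ne') (pow_ne_zero 2 (hene s hs))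
      have hden2 : Real.sqrt (κ s^2 + τ s^2) * e s ≠ 0 := mul_ne_zero hsX.ne' (hene s hs)
      rw [div_mul_div_comm, div_eq_div_iff (by simpa using hden1) hden2]
      linear_combination (κ s * c * Real.sqrt (κ s^2 + τ s^2) * e s) * haux
    -- sigma at s equals sigma at s₀
    refine ⟨sigmaFun κ τ s₀, fun s hs => ?_⟩
    have h1 := hsig s hs
    have h2 := hsig s₀ hs₀
    have hXs := hXpos s hs
    have hXs0 := hXpos s₀ hs₀
    have hsXs : 0 < Real.sqrt (κ s^2 + τ s^2) := Real.sqrt_pos.mpr hXs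
    have hsXs0 : 0 < Real.sqrt (κ s₀^2 + τ s₀^2) := Real.sqrt_pos.mpr hXs0
    have hsqs : Real.sqrt (κ s^2 + τ s^2) ^ 2 = κ s^2 + τ s^2 := Real.sq_sqrt hXs.le
    have hsqs0 : Real.sqrt (κ s₀^2 + τ s₀^2) ^ 2 = κ s₀^2 + τ s₀^2 := Real.sq_sqrt hXs0.le
    by_cases hc0 : c = 0
    · rw [h1, h2, hc0]; simp
    · -- squares equal and same sign
      have hsqeq : (sigmaFun κ τ s)^2 = (sigmaFun κ τ s₀)^2 := by
        rw [h1, h2]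
        rw [div_pow, div_pow, mul_pow, mul_pow, mul_pow, mul_pow, hsqs, hsqs0]
        rw [hkey s hs, hkey s₀ hs₀]
        have h1c : (1:ℝ) - c^2 ≠ 0 := by nlinarith [hc2]
        have hd1 : κ s^2 * (1 - c^2) ≠ 0 := mul_ne_zero (pow_ne_zero 2 (hκne s hs)) h1c
        have hd2 : κ s₀^2 * (1 - c^2) ≠ 0 := mul_ne_zero (pow_ne_zero 2 (hκne s₀ hs₀)) h1c
        rw [div_eq_div_iff hd1 hd2]
        ring
      have hsign : 0 < e s * e s₀ := sign_const hconn hecont hene hs hs₀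
      have hprod : 0 < sigmaFun κ τ s * sigmaFun κ τ s₀ ∨
          (sigmaFun κ τ s = sigmaFun κ τ s₀) := by
        by_cases hcc : 0 < c^2
        · left
          rw [h1, h2]
          rw [div_mul_div_comm]
          apply div_pos
          · nlinarith [mul_pos (mul_pos (hκpos s hs) (hκpos s₀ hs₀)) hcc]
          · rcases (mul_pos_iff.mp hsign) with ⟨he1, he2⟩ | ⟨he1, he2⟩
            · nlinarith [mul_pos hsXs hsXs0, mul_pos he1 he2]
            · nlinarith [mul_pos hsXs hsXs0, mul_pos_of_neg_of_neg he1 he2]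
        · right
          have : c = 0 := by nlinarith [sq_nonneg c]
          exact absurd this hc0
      rcases hprod with hp | hp
      · rcases sq_eq_sq_iff_eq_or_eq_neg.mp hsqeq with h | h
        · exact h
        · exfalso; rw [h] at hp; nlinarith [sq_nonneg (sigmaFun κ τ s₀)]
      · exact hp
  · -- sigma constant → slant helix
    rintro ⟨C, hC⟩
    set S := Real.sqrt (1 + C^2) with hS_def
    have hSpos : 0 < S := Real.sqrt_pos.mpr (by nlinarith [sq_nonneg C])
    have hS2 : S^2 = 1 + C^2 := Real.sq_sqrt (by nlinarith [sq_nonneg C])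
    set r : ℝ := 1/S with hr_def
    set c : ℝ := C/S with hc_def
    set φ : ℝ → ℝ := fun s => τ s / Real.sqrt (κ s^2 + τ s^2) with hφ_def
    set ψ : ℝ → ℝ := fun s => κ s / Real.sqrt (κ s^2 + τ s^2) with hψ_def
    set Lf : ℝ → E3 := fun s => (r * φ s) • t s + c • n s + (r * ψ s) • m s with hLf_def
    -- derivative computations
    have hφψ : ∀ s ∈ I, HasDerivAt φ (C * κ s) s ∧ HasDerivAt ψ (-(C * τ s)) s := by
      intro s hs
      have hX := hXpos s hs
      have hsX : 0 < Real.sqrt (κ s^2 + τ s^2) := Real.sqrt_pos.mpr hX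
      have hsq : Real.sqrt (κ s^2 + τ s^2) * Real.sqrt (κ s^2 + τ s^2) = κ s^2 + τ s^2 :=
        Real.mul_self_sqrt hX.le
      have hdκ : HasDerivAt κ (deriv κ s) s := hda_of_cdo hI hκ hs
      have hdτ : HasDerivAt τ (deriv τ s) s := hda_of_cdo hI hτ hs
      have hdX : HasDerivAt (fun u => κ u^2 + τ u^2)
          (2 * κ s * deriv κ s + 2 * τ s * deriv τ s) s := by
        have h1 : HasDerivAt (fun u => κ u^2) (2 * κ s * deriv κ s) s := by
          simpa [mul_comm] using (hdκ.fun_pow 2)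
        have h2 : HasDerivAt (fun u => τ u^2) (2 * τ s * deriv τ s) s := by
          simpa [mul_comm] using (hdτ.fun_pow 2)
        simpa using h1.fun_add h2
      have hdsX : HasDerivAt (fun u => Real.sqrt (κ u^2 + τ u^2))
          ((2 * κ s * deriv κ s + 2 * τ s * deriv τ s) / (2 * Real.sqrt (κ s^2 + τ s^2))) s := by
        exact ((Real.hasDerivAt_sqrt hX.ne').comp s hdX).congr_deriv (by field_simp)
      -- value of C in terms of derivatives
      have hCval : deriv τ s * κ s - τ s * deriv κ s =
          C * ((κ s^2 + τ s^2) * Real.sqrt (κ s^2 + τ s^2)) := by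
        have h0 := hC s hs
        unfold sigmaFun at h0
        have hdq : HasDerivAt (fun u => τ u / κ u)
            ((deriv τ s * κ s - τ s * deriv κ s) / κ s^2) s := hdτ.div hdκ (hκne s hs)
        rw [hdq.deriv, rpow_three_halves hX] at h0
        have hκ2 : κ s^2 ≠ 0 := pow_ne_zero 2 (hκne s hs)
        have hden : ((κ s^2 + τ s^2) * Real.sqrt (κ s^2 + τ s^2)) * κ s^2 ≠ 0 :=
          mul_ne_zero (mul_ne_zero hX.ne' hsX.ne') hκ2
        rw [div_mul_div_comm, div_eq_iff hden] at h0
        apply mul_left_cancel₀ hκ2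
        linear_combination h0
      constructor
      · have h1 : HasDerivAt φ
            ((deriv τ s * Real.sqrt (κ s^2 + τ s^2) - τ s *
              ((2 * κ s * deriv κ s + 2 * τ s * deriv τ s) / (2 * Real.sqrt (κ s^2 + τ s^2)))) /
              (Real.sqrt (κ s^2 + τ s^2))^2) s := hdτ.div hdsX hsX.ne'
        convert h1 using 1
        rw [Real.sq_sqrt hX.le]
        field_simp
        linear_combination (-κ s) * hCval - (deriv τ s) * hsq
      · have h1 : HasDerivAt ψ
            ((deriv κ s * Real.sqrt (κ s^2 + τ s^2) - κ s *
              ((2 * κ s * deriv κ s + 2 * τ s * deriv τ s) / (2 * Real.sqrt (κ s^2 + τ s^2)))) /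
              (Real.sqrt (κ s^2 + τ s^2))^2) s := hdκ.div hdsX hsX.ne'
        convert h1 using 1
        rw [Real.sq_sqrt hX.le]
        field_simp
        linear_combination (τ s) * hCval - (deriv κ s) * hsq
    have hLf0 : ∀ s ∈ I, HasDerivAt Lf 0 s := by
      intro s hs
      obtain ⟨hφ', hψ'⟩ := hφψ s hs
      have hX := hXpos s hs
      have hsX : 0 < Real.sqrt (κ s^2 + τ s^2) := Real.sqrt_pos.mpr hX
      have h1 := (hφ'.const_mul r).smul (hdt s hs)
      have h2 := (hdn s hs).const_smul c
      have h3 := (hψ'.const_mul r).smul (hdm s hs)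
      have h4 := (h1.add h2).add h3
      have hcoeff : (r * φ s) • (κ s • n s) + (r * (C * κ s)) • t s +
          c • (-(κ s) • t s + τ s • m s) +
          ((r * ψ s) • (-(τ s) • n s) + (r * -(C * τ s)) • m s) =
          (r * C * κ s - c * κ s) • t s + (r * φ s * κ s - r * ψ s * τ s) • n s +
          (c * τ s - r * C * τ s) • m s := by
        module
      have hz1 : r * C * κ s - c * κ s = 0 := by
        rw [hc_def, hr_def]; field_simp; ring
      have hz2 : r * φ s * κ s - r * ψ s * τ s = 0 := by
        rw [hφ_def, hψ_def]
        field_simp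
        ring
      have hz3 : c * τ s - r * C * τ s = 0 := by
        rw [hc_def, hr_def]; field_simp; ring
      rw [hcoeff, hz1, hz2, hz3] at h4
      simp at h4; rw [hLf_def]; exact h4
    have hconst : ∀ s ∈ I, Lf s = Lf s₀ := fun s hs =>
      const_of_deriv_zero hI hconn hLf0 hs hs₀
    refine ⟨Lf s₀, ?_, c, fun s hs => ?_⟩
    · -- norm 1
      have hX := hXpos s₀ hs₀
      have hsq : Real.sqrt (κ s₀^2 + τ s₀^2) * Real.sqrt (κ s₀^2 + τ s₀^2) = κ s₀^2 + τ s₀^2 :=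
        Real.mul_self_sqrt hX.le
      have hsX : 0 < Real.sqrt (κ s₀^2 + τ s₀^2) := Real.sqrt_pos.mpr hX
      have hLL : ⟪Lf s₀, Lf s₀⟫ = 1 := by
        rw [hLf_def]
        simp only [inner_add_left, inner_add_right, real_inner_smul_left, real_inner_smul_right]
        have c1 : ⟪n s₀, t s₀⟫ = 0 := by rw [real_inner_comm]; exact htn s₀ hs₀
        have c2 : ⟪m s₀, t s₀⟫ = 0 := by rw [real_inner_comm]; exact htm s₀ hs₀
        have c3 : ⟪m s₀, n s₀⟫ = 0 := by rw [real_inner_comm]; exact hnm s₀ hs₀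
        simp only [htt s₀ hs₀, hnn s₀ hs₀, hmm s₀ hs₀, htn s₀ hs₀, htm s₀ hs₀,
          hnm s₀ hs₀, c1, c2, c3, mul_zero, zero_mul, mul_one, add_zero, zero_add]
        have hφψsum : φ s₀^2 + ψ s₀^2 = 1 := by
          rw [hφ_def, hψ_def]
          simp only
          rw [div_pow, div_pow, Real.sq_sqrt hX.le, ← add_div,
            div_eq_one_iff_eq hX.ne']
          ring
        have hrc : r^2 + c^2 = 1 := by
          rw [hr_def, hc_def]
          have h1C : (1:ℝ) + C^2 ≠ 0 := by nlinarith [sq_nonneg C]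
          rw [div_pow, div_pow, ← add_div, hS2, div_eq_one_iff_eq h1C]
          ring
        linear_combination (r^2) * hφψsum + hrc
      have hnorm : ‖Lf s₀‖ * ‖Lf s₀‖ = 1 := by
        rw [← real_inner_self_eq_norm_mul_norm, hLL]
      nlinarith [norm_nonneg (Lf s₀), hnorm]
    · -- inner product with n is c
      rw [← hconst s hs, hLf_def]
      have c1 : ⟪n s, t s⟫ = 0 := by rw [real_inner_comm]; exact htn s hs
      simp only [inner_add_right, real_inner_smul_right, c1, hnn s hs, hnm s hs,
        mul_zero, mul_one, add_zero, zero_add]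


end SlantAux

open SlantAux

/-- A unit-speed curve `α` in ℝ³ with `κ > 0` (with Frenet frame
`t, n, b`, torsion `τ`) is a slant helix (its unit principal normal makes a
constant angle with some fixed unit vector) iff the function
`σ = (κ²/(κ² + τ²)^{3/2}) · (τ/κ)'` is constant on `I`. -/
theorem slant_helix_iff_sigma_constant
    (I : Set ℝ) (hI : IsOpen I) (hconn : IsPreconnected I)
    (α : ℝ → EuclideanSpace ℝ (Fin 3))
    (hα : ContDiffOn ℝ (⊤ : ℕ∞) α I)
    (t n b : ℝ → EuclideanSpace ℝ (Fin 3)) (κ τ : ℝ → ℝ)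
    (hκ : ContDiffOn ℝ (⊤ : ℕ∞) κ I) (hτ : ContDiffOn ℝ (⊤ : ℕ∞) τ I)
    (ht : ∀ s ∈ I, t s = deriv α s)
    (hunit : ∀ s ∈ I, ‖t s‖ = 1) (hnunit : ∀ s ∈ I, ‖n s‖ = 1)
    (hκpos : ∀ s ∈ I, 0 < κ s)
    (hFrenet₁ : ∀ s ∈ I, deriv t s = κ s • n s)
    (hFrenet₂ : ∀ s ∈ I, deriv n s = -(κ s) • t s + τ s • b s)
    (hFrenet₃ : ∀ s ∈ I, deriv b s = -(τ s) • n s) :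
    (∃ L : EuclideanSpace ℝ (Fin 3), ‖L‖ = 1 ∧ ∃ c : ℝ, ∀ s ∈ I, ⟪n s, L⟫ = c) ↔
      (∃ C : ℝ, ∀ s ∈ I,
        (κ s)^2 / ((κ s)^2 + (τ s)^2)^((3:ℝ)/2) * deriv (fun u => τ u / κ u) s = C) := by
  have hκi : ContDiffOn ℝ ∞ κ I := hκ.of_le (by simp)
  have hτi : ContDiffOn ℝ ∞ τ I := hτ.of_le (by simp)
  have hκne : ∀ s ∈ I, κ s ≠ 0 := fun s hs => (hκpos s hs).ne'
  have hsucc : (∞ : WithTop ℕ∞) + 1 ≤ ∞ := le_of_eq rfl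
  -- smoothness of t
  have htc : ContDiffOn ℝ ∞ t I := by
    have h1 : ContDiffOn ℝ ∞ (deriv α) I := hα.deriv_of_isOpen hI (by simp)
    exact h1.congr (fun s hs => ht s hs)
  have hdt : ∀ s ∈ I, HasDerivAt t (κ s • n s) s := fun s hs =>
    hFrenet₁ s hs ▸ hda_of_cdo hI htc hs
  have htt : ∀ s ∈ I, ⟪t s, t s⟫ = 1 := fun s hs => by
    rw [real_inner_self_eq_norm_mul_norm, hunit s hs]; norm_num
  have hnn : ∀ s ∈ I, ⟪n s, n s⟫ = 1 := fun s hs => by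
    rw [real_inner_self_eq_norm_mul_norm, hnunit s hs]; norm_num
  have htn : ∀ s ∈ I, ⟪t s, n s⟫ = 0 := by
    intro s hs
    have h1 := inner_deriv_eq_zero hI hs (hdt s hs) (hdt s hs) htt
    rw [real_inner_smul_left, real_inner_smul_right, real_inner_comm (n s) (t s)] at h1
    have hpos := hκpos s hs
    have h2 : ⟪n s, t s⟫ = 0 := by nlinarith [h1]
    rw [real_inner_comm]; exact h2
  -- smoothness of n
  have hnc : ContDiffOn ℝ ∞ n I := by
    have h1 : ContDiffOn ℝ ∞ (deriv t) I := htc.deriv_of_isOpen hI hsucc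
    have h2 : ContDiffOn ℝ ∞ (fun s => (κ s)⁻¹ • deriv t s) I :=
      (hκi.inv hκne).smul h1
    exact h2.congr (fun s hs => by
      rw [hFrenet₁ s hs, smul_smul, inv_mul_cancel₀ (hκne s hs), one_smul])
  -- the corrected binormal
  set m : ℝ → E3 := fun s => cp3 (t s) (n s) with hm_def
  have hmc : ContDiffOn ℝ ∞ m I := by
    have hcoord : ∀ (f : ℝ → E3), ContDiffOn ℝ ∞ f I →
        ∀ i : Fin 3, ContDiffOn ℝ ∞ (fun s => f s i) I := by
      intro f hf i
      exact (EuclideanSpace.proj i).contDiff.comp_contDiffOn hf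
    have h0 := hcoord t htc 0
    have h1 := hcoord t htc 1
    have h2 := hcoord t htc 2
    have g0 := hcoord n hnc 0
    have g1 := hcoord n hnc 1
    have g2 := hcoord n hnc 2
    have hvec : ContDiffOn ℝ ∞ (fun s => (![t s 1 * n s 2 - t s 2 * n s 1,
        t s 2 * n s 0 - t s 0 * n s 2,
        t s 0 * n s 1 - t s 1 * n s 0] : Fin 3 → ℝ)) I := by
      apply contDiffOn_pi.mpr
      intro i
      fin_cases i
      · exact (h1.mul g2).sub (h2.mul g1)
      · exact (h2.mul g0).sub (h0.mul g2)
      · exact (h0.mul g1).sub (h1.mul g0)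
    exact ((PiLp.continuousLinearEquiv 2 ℝ (fun _ : Fin 3 => ℝ)).symm :
      (Fin 3 → ℝ) →L[ℝ] E3).contDiff.comp_contDiffOn hvec
  -- orthonormality of the frame
  have hmm : ∀ s ∈ I, ⟪m s, m s⟫ = 1 := fun s hs => by
    rw [hm_def]
    rw [cp3_inner_self, htt s hs, hnn s hs, htn s hs]; norm_num
  have htm : ∀ s ∈ I, ⟪t s, m s⟫ = 0 := fun s hs => by
    rw [hm_def, real_inner_comm]
    exact cp3_inner_left (t s) (n s)
  have hnm : ∀ s ∈ I, ⟪n s, m s⟫ = 0 := fun s hs => by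
    rw [hm_def, real_inner_comm]
    exact cp3_inner_right (t s) (n s)
  have hspan : ∀ s ∈ I, ∀ w : E3,
      w = ⟪w, t s⟫ • t s + ⟪w, n s⟫ • n s + ⟪w, m s⟫ • m s := fun s hs w =>
    expand3 (htt s hs) (hnn s hs) (htn s hs)
  -- derivative facts
  have hdn : ∀ s ∈ I, HasDerivAt n (deriv n s) s := fun s hs => hda_of_cdo hI hnc hs
  have hdm : ∀ s ∈ I, HasDerivAt m (deriv m s) s := fun s hs => hda_of_cdo hI hmc hs
  -- the corrected torsion
  set τh : ℝ → ℝ := fun s => -⟪deriv m s, n s⟫ with hτh_def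
  have hτhc : ContDiffOn ℝ ∞ τh I := by
    have h1 : ContDiffOn ℝ ∞ (deriv m) I := hmc.deriv_of_isOpen hI hsucc
    exact (h1.inner ℝ hnc).neg
  -- F3 for the corrected frame
  have F3' : ∀ s ∈ I, deriv m s = -(τh s) • n s := by
    intro s hs
    have hw := hspan s hs (deriv m s)
    have hwt : ⟪deriv m s, t s⟫ = 0 := by
      have hmt : ∀ u ∈ I, ⟪m u, t u⟫ = 0 := fun u hu => by
        rw [real_inner_comm]; exact htm u hu
      have h1 := inner_deriv_eq_zero hI hs (hdm s hs) (hdt s hs) hmt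
      have hmn : ⟪m s, n s⟫ = 0 := by rw [real_inner_comm]; exact hnm s hs
      rw [real_inner_smul_right, hmn] at h1
      simpa using h1
    have hwm : ⟪deriv m s, m s⟫ = 0 := by
      have h1 := inner_deriv_eq_zero hI hs (hdm s hs) (hdm s hs) hmm
      rw [real_inner_comm (deriv m s) (m s)] at h1
      linarith [h1]
    have hwn : ⟪deriv m s, n s⟫ = -(τh s) := by rw [hτh_def]; ring_nf
    rw [hwt, hwm, hwn] at hw
    simpa using hw
  -- F2 for the corrected frame
  have F2' : ∀ s ∈ I, deriv n s = -(κ s) • t s + τh s • m s := by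
    intro s hs
    have hw := hspan s hs (deriv n s)
    have hwt : ⟪deriv n s, t s⟫ = -(κ s) := by
      have hnt : ∀ u ∈ I, ⟪n u, t u⟫ = 0 := fun u hu => by
        rw [real_inner_comm]; exact htn u hu
      have h1 := inner_deriv_eq_zero hI hs (hdn s hs) (hdt s hs) hnt
      rw [real_inner_smul_right, hnn s hs] at h1
      linarith [h1]
    have hwn : ⟪deriv n s, n s⟫ = 0 := by
      have h1 := inner_deriv_eq_zero hI hs (hdn s hs) (hdn s hs) hnn
      rw [real_inner_comm (deriv n s) (n s)] at h1
      linarith [h1]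
    have hwm : ⟪deriv n s, m s⟫ = τh s := by
      have h1 := inner_deriv_eq_zero hI hs (hdn s hs) (hdm s hs) hnm
      rw [F3' s hs, real_inner_smul_right, hnn s hs] at h1
      linarith [h1]
    rw [hwt, hwn, hwm] at hw
    rw [hw]
    module
  -- τh squared equals τ squared
  have hsqτ : ∀ s ∈ I, (τh s)^2 = (τ s)^2 := by
    intro s hs
    by_cases hτ0 : τ s = 0
    · -- τh s = 0 as well
      have h1 : deriv n s = -(κ s) • t s + τ s • b s := hFrenet₂ s hs
      have h2 : deriv n s = -(κ s) • t s + τh s • m s := F2' s hs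
      have h3 : τ s • b s = τh s • m s := by
        have := h1.symm.trans h2
        exact add_left_cancel this
      have h4 : τh s = 0 := by
        have h5 := congrArg (fun w => ⟪w, m s⟫) h3
        simp only [real_inner_smul_left] at h5
        rw [hmm s hs, hτ0] at h5
        simpa using h5.symm
      rw [h4, hτ0]
    · -- b is locally a multiple of m
      have hτcont : ContinuousAt τ s := (hτi.continuousOn.continuousAt (hI.mem_nhds hs))
      have hev : ∀ᶠ u in 𝓝 s, u ∈ I ∧ τ u ≠ 0 := by
        have h1 : ∀ᶠ u in 𝓝 s, τ u ≠ 0 := hτcont.eventually_ne hτ0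
        filter_upwards [h1, hI.mem_nhds hs] with u hu1 hu2 using ⟨hu2, hu1⟩
      set g : ℝ → E3 := fun u => ((τ u)⁻¹ * τh u) • m u with hg_def
      have hbev : b =ᶠ[𝓝 s] g := by
        filter_upwards [hev] with u ⟨huI, huτ⟩
        have h1 : deriv n u = -(κ u) • t u + τ u • b u := hFrenet₂ u huI
        have h2 : deriv n u = -(κ u) • t u + τh u • m u := F2' u huI
        have h3 : τ u • b u = τh u • m u := add_left_cancel (h1.symm.trans h2)
        rw [hg_def]
        calc b u = (τ u)⁻¹ • (τ u • b u) := by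
              rw [smul_smul, inv_mul_cancel₀ huτ, one_smul]
          _ = (τ u)⁻¹ • (τh u • m u) := by rw [h3]
          _ = ((τ u)⁻¹ * τh u) • m u := by rw [smul_smul]
      -- derivative of g at s
      have hτd : HasDerivAt τ (deriv τ s) s := hda_of_cdo hI hτi hs
      have hτhd : HasDerivAt τh (deriv τh s) s := hda_of_cdo hI hτhc hs
      have hhd : HasDerivAt (fun u => (τ u)⁻¹ * τh u)
          (deriv (fun u => (τ u)⁻¹ * τh u) s) s := by
        apply DifferentiableAt.hasDerivAt
        exact (hτd.differentiableAt.inv hτ0).mul hτhd.differentiableAt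
      have hgd : HasDerivAt g
          (((τ s)⁻¹ * τh s) • deriv m s + (deriv (fun u => (τ u)⁻¹ * τh u) s) • m s) s :=
        hhd.smul (hdm s hs)
      have hbd : HasDerivAt b
          (((τ s)⁻¹ * τh s) • deriv m s + (deriv (fun u => (τ u)⁻¹ * τh u) s) • m s) s :=
        hgd.congr_of_eventuallyEq hbev
      have hderiv_b : deriv b s =
          ((τ s)⁻¹ * τh s) • deriv m s + (deriv (fun u => (τ u)⁻¹ * τh u) s) • m s :=
        hbd.deriv
      have hkey : -(τ s) • n s =
          ((τ s)⁻¹ * τh s) • deriv m s + (deriv (fun u => (τ u)⁻¹ * τh u) s) • m s := by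
        rw [← hderiv_b, hFrenet₃ s hs]
      have h5 := congrArg (fun w => ⟪w, n s⟫) hkey
      simp only [inner_add_left, real_inner_smul_left] at h5
      rw [F3' s hs] at h5
      have hmn : ⟪m s, n s⟫ = 0 := by rw [real_inner_comm]; exact hnm s hs
      rw [real_inner_smul_left, hnn s hs, hmn] at h5
      -- h5 : -τ s * 1 = (τ s)⁻¹ * τh s * (-τh s * 1) + d * 0
      have h6 : -(τ s) = (τ s)⁻¹ * τh s * (-(τh s)) := by
        simpa using h5
      have h7 : τ s * (-(τ s)) = τ s * ((τ s)⁻¹ * τh s * (-(τh s))) := by rw [← h6]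
      have h8 : τ s * ((τ s)⁻¹ * τh s * (-(τh s))) = -(τh s^2) := by
        field_simp
      rw [h8] at h7
      nlinarith [h7]
  -- assemble
  have hiff := classical_main hI hconn hκi hτhc htc hnc hmc hκpos htt hnn hmm htn htm hnm
    hspan hFrenet₁ F2' F3'
  refine hiff.trans ⟨fun h => ?_, fun h => ?_⟩
  · exact sigmaFun_const_transfer hI hconn hκi hτi hτhc hκpos hsqτ h
  · exact sigmaFun_const_transfer hI hconn hκi hτhc hτi hκpos
      (fun s hs => (hsqτ s hs).symm) h
end
end

section
/- Let M ⊂ ℝⁿ be a helix hypersurface with respect to a fixed unit direction d, i.e. ⟨d, ξ⟩ is constant on M where ξ is a unit normal field. If α : I → M is a unit-speed geodesic of M with nonvanishing curvature in ℝⁿ, then α is a slant helix in ℝⁿ with axis d: the unit principal normal V₂ of α satisfies that ⟨V₂, d⟩ is constant along α. -/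
open scoped RealInnerProductSpace

/-!
Along a geodesic the acceleration `α'' = λ ξ(α)` is normal to `M`, so the principal normal is
`V₂ = sign λ · ξ(α)` and `⟨V₂, d⟩ = sign λ · ⟨ξ(α), d⟩`. The second factor is constant because `M`
is a helix hypersurface; the first because `λ` is continuous and, by `κ > 0`, never vanishes on
the connected parameter interval.
-/

theorem inv_norm_smul_smul_of_norm_eq_one {E : Type*} [NormedAddCommGroup E] [NormedSpace ℝ E]
    {u : E} (hu : ‖u‖ = 1) (r : ℝ) :
    ‖r • u‖⁻¹ • r • u = (SignType.sign r : ℝ) • u := by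
  rcases eq_or_ne r 0 with rfl | hr
  · simp
  rw [smul_smul, norm_smul, hu, mul_one, Real.norm_eq_abs]
  congr 1
  rw [inv_mul_eq_iff_eq_mul₀ (abs_ne_zero.mpr hr), mul_comm, sign_mul_abs]

theorem IsPreconnected.sign_apply_eq {X : Type*} [TopologicalSpace X] {s : Set X}
    (hs : IsPreconnected s) {f : X → ℝ} (hf : ContinuousOn f s) (hf₀ : ∀ x ∈ s, f x ≠ 0)
    {x y : X} (hx : x ∈ s) (hy : y ∈ s) : SignType.sign (f x) = SignType.sign (f y) :=
  hs.constant (fun z hz ↦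
    (continuousAt_sign_of_ne_zero (hf₀ z hz)).comp_continuousWithinAt (hf z hz)) hx hy

theorem geodesic_on_helix_hypersurface_is_slant_helix_general
    (n : ℕ) (M : Set (EuclideanSpace ℝ (Fin n)))
    (ξ : EuclideanSpace ℝ (Fin n) → EuclideanSpace ℝ (Fin n))
    (hξunit : ∀ p ∈ M, ‖ξ p‖ = 1)
    (d : EuclideanSpace ℝ (Fin n))
    (hhelix : ∃ c : ℝ, ∀ p ∈ M, ⟪d, ξ p⟫ = c)
    (I : Set ℝ) (hconn : IsPreconnected I)
    (α : ℝ → EuclideanSpace ℝ (Fin n))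
    (hαM : ∀ s ∈ I, α s ∈ M)
    (lam : ℝ → ℝ) (hlamcont : ContinuousOn lam I)
    (hgeo : ∀ s ∈ I, deriv (deriv α) s = lam s • ξ (α s))
    (hκpos : ∀ s ∈ I, 0 < ‖deriv (deriv α) s‖) :
    ∃ c : ℝ, ∀ s ∈ I,
      ⟪‖deriv (deriv α) s‖⁻¹ • deriv (deriv α) s, d⟫ = c := by
  obtain ⟨c, hc⟩ := hhelix
  rcases I.eq_empty_or_nonempty with rfl | ⟨s₀, hs₀⟩
  · simp
  have hV₂ : ∀ s ∈ I,
      ⟪‖deriv (deriv α) s‖⁻¹ • deriv (deriv α) s, d⟫ = SignType.sign (lam s) * c := by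
    intro s hs
    rw [hgeo s hs, inv_norm_smul_smul_of_norm_eq_one (hξunit _ (hαM s hs)), real_inner_smul_left,
      real_inner_comm, hc _ (hαM s hs)]
  have hlam₀ : ∀ s ∈ I, lam s ≠ 0 := by
    intro s hs hzero
    simpa [hgeo s hs, hzero] using hκpos s hs
  refine ⟨SignType.sign (lam s₀) * c, fun s hs ↦ ?_⟩
  rw [hV₂ s hs, hconn.sign_apply_eq hlamcont hlam₀ hs hs₀]

/-- Let `M ⊂ ℝⁿ` be a helix hypersurface with respect to a fixed
unit direction `d` (i.e. `⟨d, ξ⟩` is constant on `M`, `ξ` a unit normal field),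
and let `α : I → M` be a unit-speed geodesic (so `α'' = λ • ξ ∘ α`) with
nonvanishing curvature. Then `α` is a slant helix with axis `d`: the inner
product of its unit principal normal `V₂ = α''/‖α''‖` with `d` is constant. -/
theorem geodesic_on_helix_hypersurface_is_slant_helix
    (n : ℕ) (M : Set (EuclideanSpace ℝ (Fin n)))
    (ξ : EuclideanSpace ℝ (Fin n) → EuclideanSpace ℝ (Fin n))
    (hξunit : ∀ p ∈ M, ‖ξ p‖ = 1)
    (d : EuclideanSpace ℝ (Fin n)) (hd : ‖d‖ = 1)
    (hhelix : ∃ c : ℝ, ∀ p ∈ M, ⟪d, ξ p⟫ = c)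
    (I : Set ℝ) (hconn : IsPreconnected I)
    (α : ℝ → EuclideanSpace ℝ (Fin n))
    (hαM : ∀ s ∈ I, α s ∈ M)
    (hunit : ∀ s ∈ I, ‖deriv α s‖ = 1)
    (lam : ℝ → ℝ) (hlamcont : ContinuousOn lam I)
    (hgeo : ∀ s ∈ I, deriv (deriv α) s = lam s • ξ (α s))
    (hκpos : ∀ s ∈ I, 0 < ‖deriv (deriv α) s‖) :
    ∃ c : ℝ, ∀ s ∈ I,
      ⟪‖deriv (deriv α) s‖⁻¹ • deriv (deriv α) s, d⟫ = c :=
  geodesic_on_helix_hypersurface_is_slant_helix_general n M ξ hξunit d hhelix I hconn α hαM lam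
    hlamcont hgeo hκpos
end
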